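/- Let {V(s) : s ≥ 0} be a locally a.s. bounded C-semigroup on a complete RN module X with generator (A,D(A)). For any z ∈ C(D(A)), the map g : [0,∞) → X defined by g(s) = C V(s) z is locally L⁰-Lipschitz: for every l > 0 there exists ξ_l ∈ L⁰₊(F) with ‖g(s₁) - g(s₂)‖ ≤ ξ_l |s₁ - s₂| for all s₁, s₂ ∈ [0,l]. -/

import Mathlib

open MeasureTheory Filter Set
noncomputable section

/-- A random normed module (RN module) over ℝ with base `(Ω, F, P)`:
an `L⁰(F,ℝ)`-module `X` together with an `L⁰`-norm. The `L⁰(F,ℝ)`-scalar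
multiplication is bundled as the field `smul`. -/
structure RNModuleStr {Ω : Type*} [MeasurableSpace Ω] (P : Measure Ω)
    (X : Type*) [AddCommGroup X] where
  smul : (Ω →ₘ[P] ℝ) → X → X
  nrm : X → Ω →ₘ[P] ℝ
  one_smul' : ∀ x, smul 1 x = x
  mul_smul' : ∀ ξ η x, smul (ξ * η) x = smul ξ (smul η x)
  smul_add' : ∀ ξ x y, smul ξ (x + y) = smul ξ x + smul ξ y
  add_smul' : ∀ ξ η x, smul (ξ + η) x = smul ξ x + smul η x
  nrm_nonneg : ∀ x, 0 ≤ nrm x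
  nrm_smul : ∀ ξ x, nrm (smul ξ x) = |ξ| * nrm x
  nrm_add_le : ∀ x y, nrm (x + y) ≤ nrm x + nrm y
  nrm_eq_zero : ∀ x, nrm x = 0 → x = 0

namespace RNModuleStr

variable {Ω : Type*} [MeasurableSpace Ω] {P : Measure Ω} {X : Type*} [AddCommGroup X]

/-- Scalar multiplication by a real constant (viewed as a constant random variable). -/
def rsmul (M : RNModuleStr P X) (c : ℝ) (x : X) : X :=
  M.smul (AEEqFun.const Ω c) x

/-- Convergence in the `(ε,λ)`-topology of an RN module, i.e. convergence in
probability of the `L⁰`-norms of the differences, along an arbitrary filter. -/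
def TendstoRN (M : RNModuleStr P X) {ι : Type*} (f : ι → X) (l : Filter ι) (x : X) : Prop :=
  ∀ ε : ℝ, 0 < ε → Tendsto (fun i => P {ω : Ω | ε ≤ M.nrm (f i - x) ω}) l (nhds 0)

/-- Sequential continuity of a map between RN modules; in the metrizable
`(ε,λ)`-topology this is equivalent to continuity. -/
def RNContinuousMap {Y : Type*} [AddCommGroup Y] (M : RNModuleStr P X)
    (N : RNModuleStr P Y) (T : X → Y) : Prop :=
  ∀ (u : ℕ → X) (x : X), M.TendstoRN u atTop x → N.TendstoRN (fun n => T (u n)) atTop (T x)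

/-- `T : X → Y` is a module homomorphism of `L⁰`-modules. -/
def IsModuleHom {Y : Type*} [AddCommGroup Y] (M : RNModuleStr P X)
    (N : RNModuleStr P Y) (T : X → Y) : Prop :=
  (∀ x y : X, T (x + y) = T x + T y) ∧ ∀ (ξ : Ω →ₘ[P] ℝ) (x : X), T (M.smul ξ x) = N.smul ξ (T x)

/-- `T` is almost surely bounded: `‖Tz‖ ≤ η ‖z‖` for some `η ∈ L⁰₊`. -/
def ASBounded {Y : Type*} [AddCommGroup Y] (M : RNModuleStr P X)
    (N : RNModuleStr P Y) (T : X → Y) : Prop :=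
  ∃ η : Ω →ₘ[P] ℝ, 0 ≤ η ∧ ∀ x : X, N.nrm (T x) ≤ η * M.nrm x

/-- Riemann sum over the uniform partition of `[a,b]` into `n` pieces. -/
def rsum (M : RNModuleStr P X) (f : ℝ → X) (a b : ℝ) (n : ℕ) : X :=
  ∑ i ∈ Finset.range n, M.rsmul ((b - a) / n) (f (a + (b - a) * i / n))

/-- `y` is the Riemann integral `∫ₐᵇ f(u) du` in the complete RN module `X`
(limit in the `(ε,λ)`-topology of the uniform Riemann sums). -/
def IsIntegral (M : RNModuleStr P X) (f : ℝ → X) (a b : ℝ) (y : X) : Prop :=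
  M.TendstoRN (fun n => M.rsum f a b n) atTop y

/-- The family `{V(s) : s ≥ 0}` is locally a.s. bounded:
`⋁_{s∈[0,l]} ‖V(s)‖ ∈ L⁰₊(F)` for every `l > 0`. -/
def LocASBounded (M : RNModuleStr P X) (V : ℝ → X → X) : Prop :=
  ∀ l : ℝ, 0 < l → ∃ η : Ω →ₘ[P] ℝ, 0 ≤ η ∧
    ∀ s ∈ Icc (0:ℝ) l, ∀ x : X, M.nrm (V s x) ≤ η * M.nrm x

/-- `{V(s) : s ≥ 0}` is a `C`-semigroup on the RN module `X`. -/
structure IsCSemigroup (M : RNModuleStr P X) (V : ℝ → X → X) (C : X → X) : Prop where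
  C_hom : M.IsModuleHom M C
  C_bdd : ASBounded M M C
  C_inj : Function.Injective C
  V_hom : ∀ s : ℝ, 0 ≤ s → M.IsModuleHom M (V s)
  V_bdd : ∀ s : ℝ, 0 ≤ s → ASBounded M M (V s)
  strong_cont : ∀ (z : X) (t : ℝ), 0 ≤ t →
    M.TendstoRN (fun s => V s z) (nhdsWithin t (Ici 0)) (V t z)
  V_zero : V 0 = C
  C_V : ∀ s t : ℝ, 0 ≤ s → 0 ≤ t → ∀ z : X, C (V (s + t) z) = V s (V t z)

/-- `(A, DA)` is the generator of the `C`-semigroup `{V(s) : s ≥ 0}`: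
`DA = {z : lim_{s↓0} (V(s)z - Cz)/s exists and lies in R(C)}` and
`Az = C⁻¹ lim_{s↓0} (V(s)z - Cz)/s`. -/
structure IsGenerator (M : RNModuleStr P X) (V : ℝ → X → X) (C : X → X)
    (DA : Set X) (A : X → X) : Prop where
  mem_iff : ∀ z : X, z ∈ DA ↔ ∃ w : X,
    M.TendstoRN (fun s => M.rsmul s⁻¹ (V s z - C z)) (nhdsWithin 0 (Ioi 0)) (C w)
  spec : ∀ z ∈ DA,
    M.TendstoRN (fun s => M.rsmul s⁻¹ (V s z - C z)) (nhdsWithin 0 (Ioi 0)) (C (A z))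

/-- `{V(s) : s ≥ 0}` is a mild `C`-existence family for the module homomorphism
`A` with domain `DA`. -/
structure IsMildCExistenceFamily (M : RNModuleStr P X) (V : ℝ → X → X) (C : X → X)
    (DA : Set X) (A : X → X) : Prop where
  V_hom : ∀ s : ℝ, 0 ≤ s → M.IsModuleHom M (V s)
  locBdd : M.LocASBounded V
  strong_cont : ∀ (z : X) (t : ℝ), 0 ≤ t →
    M.TendstoRN (fun s => V s z) (nhdsWithin t (Ici 0)) (V t z)
  integral_mem : ∀ (z : X) (s : ℝ), 0 ≤ s → ∃ y : X,
    M.IsIntegral (fun u => V u z) 0 s y ∧ y ∈ DA ∧ A y = V s z - C z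

/-- `A` (with domain `DA`) is a closed module homomorphism: its graph is closed
in the `(ε,λ)`-topology. -/
def IsClosedOperator (M : RNModuleStr P X) (DA : Set X) (A : X → X) : Prop :=
  ∀ (u : ℕ → X) (z y : X), (∀ n, u n ∈ DA) →
    M.TendstoRN u atTop z → M.TendstoRN (fun n => A (u n)) atTop y →
    z ∈ DA ∧ A z = y

end RNModuleStr

open RNModuleStr

/-!
For `b ≤ a` the semigroup law gives `C V(a) C y - C V(b) C y = V(b) (C V(a - b) y - C C y)`, so
everything reduces to `‖C V(h) y - C C y‖ ≤ h η ‖C A y‖` for `0 < h ≤ l`, where `η` bounds `V` on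
`[0, l]`. Splitting `[0, h]` into `n + 1` steps of length `δ`, `C V(h) y - C C y` telescopes into
`∑ V(iδ) (V(δ) y - C y)`, whose norm is at most `h η ‖(V(δ) y - C y) / δ‖`. As `δ → 0` the
difference quotient tends to `C A y` in probability, and along an a.e. convergent subsequence the
bound passes to the limit.
-/

open Topology

namespace MeasureTheory.AEEqFun

variable {Ω : Type*} [MeasurableSpace Ω] {P : Measure Ω}

theorem const_mul' (a b : ℝ) :
    (const Ω (a * b) : Ω →ₘ[P] ℝ) = const Ω a * const Ω b :=
  (mk_mul_mk _ _ _ _).symm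

theorem coeFn_nonneg {f : Ω →ₘ[P] ℝ} (hf : 0 ≤ f) : ∀ᵐ ω ∂P, 0 ≤ f ω := by
  filter_upwards [coeFn_le.2 hf, coeFn_zero (β := ℝ) (μ := P)] with ω hω h0
  rwa [h0] at hω

theorem mul_nonneg' {f g : Ω →ₘ[P] ℝ} (hf : 0 ≤ f) (hg : 0 ≤ g) : 0 ≤ f * g := by
  refine coeFn_le.1 ?_
  filter_upwards [coeFn_nonneg hf, coeFn_nonneg hg, coeFn_mul f g,
    coeFn_zero (β := ℝ) (μ := P)] with ω hfω hgω hmul h0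
  rw [hmul, h0]
  exact mul_nonneg hfω hgω

end MeasureTheory.AEEqFun

namespace RNModuleStr

variable {Ω : Type*} [MeasurableSpace Ω] {P : Measure Ω} {X : Type*} [AddCommGroup X]
  (M : RNModuleStr P X)

theorem zero_smul' (x : X) : M.smul 0 x = 0 := by
  have h := M.add_smul' 0 0 x
  rwa [add_zero, left_eq_add] at h

theorem neg_one_smul' (x : X) : M.smul (-1) x = -x := by
  have h := M.add_smul' 1 (-1) x
  rw [add_neg_cancel, M.zero_smul', M.one_smul'] at h
  exact (neg_eq_of_add_eq_zero_right h.symm).symm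

theorem nrm_zero : M.nrm (0 : X) = 0 := by
  conv_lhs => rw [← M.zero_smul' 0, M.nrm_smul]
  refine AEEqFun.ext ?_
  filter_upwards [AEEqFun.coeFn_mul |(0 : Ω →ₘ[P] ℝ)| (M.nrm 0),
    AEEqFun.coeFn_abs (0 : Ω →ₘ[P] ℝ), AEEqFun.coeFn_zero (β := ℝ) (μ := P)]
    with ω hmul habs h0
  rw [hmul, Pi.mul_apply, habs, h0, Pi.zero_apply, abs_zero, zero_mul]

theorem nrm_neg (x : X) : M.nrm (-x) = M.nrm x := by
  rw [← M.neg_one_smul', M.nrm_smul]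
  refine AEEqFun.ext ?_
  filter_upwards [AEEqFun.coeFn_mul |(-1 : Ω →ₘ[P] ℝ)| (M.nrm x),
    AEEqFun.coeFn_abs (-1 : Ω →ₘ[P] ℝ), AEEqFun.coeFn_neg (1 : Ω →ₘ[P] ℝ),
    AEEqFun.coeFn_one (β := ℝ) (μ := P)] with ω hmul habs hneg hone
  rw [hmul, Pi.mul_apply, habs, hneg, Pi.neg_apply, hone]
  norm_num

theorem nrm_sub_comm (x y : X) : M.nrm (x - y) = M.nrm (y - x) := by
  rw [← M.nrm_neg, neg_sub]

theorem ae_nrm_add_le (x y : X) : ∀ᵐ ω ∂P, M.nrm (x + y) ω ≤ M.nrm x ω + M.nrm y ω := by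
  filter_upwards [AEEqFun.coeFn_le.2 (M.nrm_add_le x y),
    AEEqFun.coeFn_add (M.nrm x) (M.nrm y)] with ω hω hadd
  rwa [hadd] at hω

theorem ae_nrm_sum_le (f : ℕ → X) (b : Ω →ₘ[P] ℝ) (n : ℕ) (hf : ∀ i < n, M.nrm (f i) ≤ b) :
    ∀ᵐ ω ∂P, M.nrm (∑ i ∈ Finset.range n, f i) ω ≤ n * b ω := by
  induction n with
  | zero =>
    filter_upwards [AEEqFun.coeFn_zero (β := ℝ) (μ := P)] with ω h0
    simp [M.nrm_zero, h0]
  | succ n ih =>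
    filter_upwards [ih fun i hi => hf i (Nat.lt_succ_of_lt hi),
      AEEqFun.coeFn_le.2 (hf n (Nat.lt_succ_self n)),
      M.ae_nrm_add_le (∑ i ∈ Finset.range n, f i) (f n)] with ω hsum hlast hadd
    rw [Finset.sum_range_succ]
    push_cast
    linarith

theorem rsmul_one (x : X) : M.rsmul 1 x = x :=
  M.one_smul' x

theorem rsmul_rsmul (a b : ℝ) (x : X) : M.rsmul a (M.rsmul b x) = M.rsmul (a * b) x := by
  rw [rsmul, rsmul, rsmul, AEEqFun.const_mul', M.mul_smul']

theorem coeFn_nrm_rsmul (c : ℝ) (x : X) :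
    ⇑(M.nrm (M.rsmul c x)) =ᵐ[P] fun ω => |c| * M.nrm x ω := by
  rw [rsmul, M.nrm_smul]
  filter_upwards [AEEqFun.coeFn_mul |(AEEqFun.const Ω c : Ω →ₘ[P] ℝ)| (M.nrm x),
    AEEqFun.coeFn_abs (AEEqFun.const Ω c : Ω →ₘ[P] ℝ),
    AEEqFun.coeFn_const (μ := P) Ω c] with ω hmul habs hc
  rw [hmul, Pi.mul_apply, habs, hc, Function.const_apply]

theorem IsModuleHom.map_sub {T : X → X} (hT : M.IsModuleHom M T) (x y : X) :
    T (x - y) = T x - T y :=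
  (AddMonoidHom.mk' T hT.1).map_sub x y

variable {M}

theorem TendstoRN.comp {ι κ : Type*} {f : ι → X} {l : Filter ι} {x : X} (hf : M.TendstoRN f l x)
    {g : κ → ι} {l' : Filter κ} (hg : Tendsto g l' l) : M.TendstoRN (f ∘ g) l' x :=
  fun ε hε => (hf ε hε).comp hg

theorem TendstoRN.tendstoInMeasure {ι : Type*} {f : ι → X} {l : Filter ι} {x : X}
    (hf : M.TendstoRN f l x) : TendstoInMeasure P (fun i => ⇑(M.nrm (f i - x))) l 0 := by
  rw [tendstoInMeasure_iff_dist]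
  intro ε hε
  refine (hf ε hε).congr fun i => measure_congr ?_
  filter_upwards [AEEqFun.coeFn_nonneg (M.nrm_nonneg (f i - x))] with ω hω
  change (ε ≤ _) = (ε ≤ dist _ 0)
  rw [Real.dist_eq, sub_zero, abs_of_nonneg hω]

theorem TendstoRN.ae_le_mul_nrm {u : ℕ → X} {x : X} (hu : M.TendstoRN u atTop x)
    {f c : Ω → ℝ} (hc : ∀ᵐ ω ∂P, 0 ≤ c ω) (h : ∀ n, ∀ᵐ ω ∂P, f ω ≤ c ω * M.nrm (u n) ω) :
    ∀ᵐ ω ∂P, f ω ≤ c ω * M.nrm x ω := by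
  obtain ⟨ns, -, hns⟩ := hu.tendstoInMeasure.exists_seq_tendsto_ae
  have htri : ∀ n, ∀ᵐ ω ∂P, M.nrm (u n) ω ≤ M.nrm x ω + M.nrm (u n - x) ω := fun n => by
    simpa only [add_sub_cancel] using M.ae_nrm_add_le x (u n - x)
  filter_upwards [hns, hc, ae_all_iff.2 h, ae_all_iff.2 htri] with ω hω hcω hf htri
  have hlim : Tendsto (fun k => c ω * (M.nrm x ω + M.nrm (u (ns k) - x) ω)) atTop
      (𝓝 (c ω * M.nrm x ω)) := by
    simpa using (tendsto_const_nhds.add hω).const_mul (c ω)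
  exact ge_of_tendsto' hlim fun k =>
    (hf (ns k)).trans (mul_le_mul_of_nonneg_left (htri (ns k)) hcω)

end RNModuleStr

namespace RNModuleStr.IsCSemigroup

variable {Ω : Type*} [MeasurableSpace Ω] {P : Measure Ω} {X : Type*} [AddCommGroup X]
  {M : RNModuleStr P X} {V : ℝ → X → X} {C : X → X} (hV : IsCSemigroup M V C)
include hV

theorem C_V_comm {s : ℝ} (hs : 0 ≤ s) (x : X) : C (V s x) = V s (C x) := by
  simpa [hV.V_zero] using hV.C_V s 0 hs le_rfl x

theorem C_V_add_sub {s t : ℝ} (hs : 0 ≤ s) (ht : 0 ≤ t) (x : X) :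
    C (V (s + t) x) - C (V s x) = V s (V t x - C x) := by
  rw [(hV.V_hom s hs).map_sub, hV.C_V s t hs ht, hV.C_V_comm hs]

theorem C_V_natCast_mul_sub_eq_sum {δ : ℝ} (hδ : 0 ≤ δ) (x : X) (n : ℕ) :
    C (V (n * δ) x) - C (C x) = ∑ i ∈ Finset.range n, V (i * δ) (V δ x - C x) := by
  induction n with
  | zero => simp [hV.V_zero]
  | succ n ih =>
    have hnδ : 0 ≤ (n : ℝ) * δ := by positivity
    rw [Finset.sum_range_succ, ← ih, ← hV.C_V_add_sub hnδ hδ, Nat.cast_succ, add_one_mul]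
    abel

theorem ae_nrm_C_V_natCast_mul_sub_le {l : ℝ} {η : Ω →ₘ[P] ℝ}
    (hη : ∀ s ∈ Icc (0 : ℝ) l, ∀ x : X, M.nrm (V s x) ≤ η * M.nrm x)
    {δ : ℝ} (hδ : 0 < δ) {n : ℕ} (hnδ : n * δ ≤ l) (x : X) :
    ∀ᵐ ω ∂P, M.nrm (C (V (n * δ) x) - C (C x)) ω
      ≤ n * δ * η ω * M.nrm (M.rsmul δ⁻¹ (V δ x - C x)) ω := by
  have hterm : ∀ i < n, M.nrm (V (i * δ) (V δ x - C x)) ≤ η * M.nrm (V δ x - C x) := by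
    intro i hi
    refine hη _ ⟨by positivity, le_trans ?_ hnδ⟩ _
    gcongr
  have hnrm := M.coeFn_nrm_rsmul δ (M.rsmul δ⁻¹ (V δ x - C x))
  rw [M.rsmul_rsmul, mul_inv_cancel₀ hδ.ne', M.rsmul_one] at hnrm
  rw [hV.C_V_natCast_mul_sub_eq_sum hδ.le]
  filter_upwards [M.ae_nrm_sum_le _ _ n hterm, AEEqFun.coeFn_mul η (M.nrm (V δ x - C x)),
    hnrm] with ω hsum hmul hnrm
  rw [hmul, Pi.mul_apply, hnrm, abs_of_pos hδ] at hsum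
  linarith

variable {DA : Set X} {A : X → X} (hA : IsGenerator M V C DA A) {y : X} (hy : y ∈ DA)
  {l : ℝ} {η : Ω →ₘ[P] ℝ} (hη0 : 0 ≤ η)
  (hη : ∀ s ∈ Icc (0 : ℝ) l, ∀ x : X, M.nrm (V s x) ≤ η * M.nrm x)
include hA hy hη0 hη

theorem ae_nrm_C_V_sub_le {h : ℝ} (hh : 0 < h) (hhl : h ≤ l) :
    ∀ᵐ ω ∂P, M.nrm (C (V h y) - C (C y)) ω ≤ h * η ω * M.nrm (C (A y)) ω := by
  set δ : ℕ → ℝ := fun n => h / ((n + 1 : ℕ) : ℝ)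
  have hδ : ∀ n, 0 < δ n := fun n => by positivity
  have hnδ : ∀ n : ℕ, ((n + 1 : ℕ) : ℝ) * δ n = h := fun n => mul_div_cancel₀ h (by positivity)
  have hδ0 : Tendsto δ atTop (𝓝[>] 0) :=
    tendsto_nhdsWithin_iff.2 ⟨(tendsto_const_div_atTop_nhds_zero_nat h).comp
      (tendsto_add_atTop_nat 1), .of_forall hδ⟩
  refine ((hA.spec y hy).comp hδ0).ae_le_mul_nrm (c := fun ω => h * η ω) ?_ fun n => ?_
  · filter_upwards [AEEqFun.coeFn_nonneg hη0] with ω hω using mul_nonneg hh.le hω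
  · simpa only [hnδ n, Function.comp_apply] using
      hV.ae_nrm_C_V_natCast_mul_sub_le hη (hδ n) ((hnδ n).trans_le hhl) y

theorem nrm_C_V_sub_le {a b : ℝ} (ha : a ∈ Icc (0 : ℝ) l) (hb : b ∈ Icc (0 : ℝ) l)
    (hba : b ≤ a) :
    M.nrm (C (V a (C y)) - C (V b (C y))) ≤ (a - b) • (η * (η * M.nrm (C (A y)))) := by
  obtain rfl | hlt := hba.eq_or_lt
  · rw [sub_self, sub_self, zero_smul, M.nrm_zero]
  have hdiff : C (V a (C y)) - C (V b (C y)) = V b (C (V (a - b) y) - C (C y)) := by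
    rw [hV.C_V_comm (sub_nonneg.2 hba), ← hV.C_V_add_sub hb.1 (sub_nonneg.2 hba),
      add_sub_cancel]
  set w := C (V (a - b) y) - C (C y)
  rw [hdiff]
  refine AEEqFun.coeFn_le.1 ?_
  filter_upwards [AEEqFun.coeFn_le.2 (hη b hb w),
    hV.ae_nrm_C_V_sub_le hA hy hη0 hη (sub_pos.2 hlt) (by linarith [ha.2, hb.1]),
    AEEqFun.coeFn_nonneg hη0, AEEqFun.coeFn_mul η (M.nrm w),
    AEEqFun.coeFn_smul (a - b) (η * (η * M.nrm (C (A y)))),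
    AEEqFun.coeFn_mul η (η * M.nrm (C (A y))), AEEqFun.coeFn_mul η (M.nrm (C (A y)))]
    with ω hVb hw hηω hm₁ hsmul hm₂ hm₃
  rw [hm₁, Pi.mul_apply] at hVb
  rw [hsmul, Pi.smul_apply, smul_eq_mul, hm₂, Pi.mul_apply, hm₃, Pi.mul_apply]
  calc M.nrm (V b w) ω ≤ η ω * M.nrm w ω := hVb
    _ ≤ η ω * ((a - b) * η ω * M.nrm (C (A y)) ω) := mul_le_mul_of_nonneg_left hw hηω
    _ = (a - b) * (η ω * (η ω * M.nrm (C (A y)) ω)) := by ring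

end RNModuleStr.IsCSemigroup

theorem stmt6_general {Ω : Type*} [MeasurableSpace Ω] (P : Measure Ω)
    {X : Type*} [AddCommGroup X] (M : RNModuleStr P X)
    (V : ℝ → X → X) (C : X → X) (DA : Set X) (A : X → X)
    (hV : IsCSemigroup M V C) (hloc : M.LocASBounded V)
    (hA : IsGenerator M V C DA A) (y : X) (hy : y ∈ DA) :
    ∀ l : ℝ, 0 < l → ∃ ξ : Ω →ₘ[P] ℝ, 0 ≤ ξ ∧
      ∀ s₁ ∈ Icc (0:ℝ) l, ∀ s₂ ∈ Icc (0:ℝ) l,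
        M.nrm (C (V s₁ (C y)) - C (V s₂ (C y))) ≤ |s₁ - s₂| • ξ := by
  intro l hl
  obtain ⟨η, hη0, hη⟩ := hloc l hl
  refine ⟨η * (η * M.nrm (C (A y))),
    AEEqFun.mul_nonneg' hη0 (AEEqFun.mul_nonneg' hη0 (M.nrm_nonneg _)), ?_⟩
  intro s₁ hs₁ s₂ hs₂
  rcases le_total s₂ s₁ with h | h
  · rw [abs_of_nonneg (sub_nonneg.2 h)]
    exact hV.nrm_C_V_sub_le hA hy hη0 hη hs₁ hs₂ h
  · rw [M.nrm_sub_comm, abs_sub_comm, abs_of_nonneg (sub_nonneg.2 h)]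
    exact hV.nrm_C_V_sub_le hA hy hη0 hη hs₂ hs₁ h

/-- for a locally a.s. bounded `C`-semigroup with generator
`(A,D(A))` and `z = Cy ∈ C(D(A))`, the map `g(s) = CV(s)z` is locally
`L⁰`-Lipschitz. -/
theorem stmt6 {Ω : Type*} [MeasurableSpace Ω] (P : Measure Ω) [IsProbabilityMeasure P]
    {X : Type*} [AddCommGroup X] (M : RNModuleStr P X)
    (V : ℝ → X → X) (C : X → X) (DA : Set X) (A : X → X)
    (hV : IsCSemigroup M V C) (hloc : M.LocASBounded V)
    (hA : IsGenerator M V C DA A) (y : X) (hy : y ∈ DA) :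
    ∀ l : ℝ, 0 < l → ∃ ξ : Ω →ₘ[P] ℝ, 0 ≤ ξ ∧
      ∀ s₁ ∈ Icc (0:ℝ) l, ∀ s₂ ∈ Icc (0:ℝ) l,
        M.nrm (C (V s₁ (C y)) - C (V s₂ (C y))) ≤ |s₁ - s₂| • ξ :=
  stmt6_general P M V C DA A hV hloc hA y hy
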